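/- Let M be a finite MDP, let π and π_β be policies with π_β(a|s) > 0 for all (s,a), fix a time step t ≥ 1 with time-indexed state distributions satisfying d_t^{π_β}(s) > 0 for all s, let w_{t−1} = ∏_{t'=0}^{t−1} π(a_{t'}|s_{t'})/π_β(a_{t'}|s_{t'}) denote the product of per-action importance weights, and let ρ_t(s) = d_t^{π}(s)/d_t^{π_β}(s) denote the state-marginal importance ratio. Then for any function f : S → ℝ, under the trajectory distribution p_{π_β}: (i) both estimators are unbiased, E_{p_{π_β}}[w_{t−1} f(s_t)] = E_{p_{π_β}}[ρ_t(s_t) f(s_t)] = E_{s ∼ d_t^{π}}[f(s)]; and (ii) the state-marginal estimator has no greater variance, Var_{p_{π_β}}(ρ_t(s_t) f(s_t)) ≤ Var_{p_{π_β}}(w_{t−1} f(s_t)). -/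
import Mathlib


open Finset

/-- Probability of a partial trajectory `(s_0, a_0, s_1, …, a_{t-1}, s_t)` (states up to
time `t`, actions up to time `t − 1`) in a finite MDP with initial distribution `d0`,
transition kernel `T` and policy `π`. -/
noncomputable def trajP {S A : Type} [Fintype S] [Fintype A] (t : ℕ)
    (d0 : S → ℝ) (T : S → A → S → ℝ) (π : S → A → ℝ)
    (τ : (Fin (t + 1) → S) × (Fin t → A)) : ℝ :=
  d0 (τ.1 0) *
    ∏ i : Fin t, (π (τ.1 i.castSucc) (τ.2 i) * T (τ.1 i.castSucc) (τ.2 i) (τ.1 i.succ))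

/-- Time-indexed state distribution `d_t^π(s)`: probability that `s_t = s` under `p_π`. -/
noncomputable def stateDistAt {S A : Type} [Fintype S] [Fintype A] [DecidableEq S] (t : ℕ)
    (d0 : S → ℝ) (T : S → A → S → ℝ) (π : S → A → ℝ) (s : S) : ℝ :=
  ∑ τ : (Fin (t + 1) → S) × (Fin t → A),
    if τ.1 (Fin.last t) = s then trajP t d0 T π τ else 0

/-- **Unbiasedness and variance reduction of the state-marginal importance ratio.**
Fix `t ≥ 1`, let `w_{t−1} = ∏_{t'=0}^{t−1} π(a_{t'}|s_{t'})/π_β(a_{t'}|s_{t'})` be the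
product of per-action importance weights and `ρ_t(s) = d_t^π(s)/d_t^{π_β}(s)` the
state-marginal importance ratio. Then for any `f : S → ℝ`, under `p_{π_β}`:
(i) `E[w_{t−1} f(s_t)] = E[ρ_t(s_t) f(s_t)] = E_{s ∼ d_t^π}[f(s)]`, and
(ii) `Var(ρ_t(s_t) f(s_t)) ≤ Var(w_{t−1} f(s_t))`. -/
theorem state_marginal_importance_ratio_unbiased_and_lower_variance
    {S A : Type} [Fintype S] [Fintype A] [DecidableEq S]
    (t : ℕ) (ht : 1 ≤ t) (d0 : S → ℝ) (T : S → A → S → ℝ)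
    (π πβ : S → A → ℝ) (f : S → ℝ)
    (hd00 : ∀ s, 0 ≤ d0 s) (hd01 : ∑ s, d0 s = 1)
    (hT0 : ∀ s a s', 0 ≤ T s a s') (hT1 : ∀ s a, ∑ s', T s a s' = 1)
    (hπ0 : ∀ s a, 0 ≤ π s a) (hπ1 : ∀ s, ∑ a, π s a = 1)
    (hβ0 : ∀ s a, 0 < πβ s a) (hβ1 : ∀ s, ∑ a, πβ s a = 1)
    (hdβ : ∀ s, 0 < stateDistAt t d0 T πβ s) :
    (∑ τ : (Fin (t + 1) → S) × (Fin t → A),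
        trajP t d0 T πβ τ *
          ((∏ i : Fin t, π (τ.1 i.castSucc) (τ.2 i) / πβ (τ.1 i.castSucc) (τ.2 i)) *
            f (τ.1 (Fin.last t))) =
      ∑ τ : (Fin (t + 1) → S) × (Fin t → A),
        trajP t d0 T πβ τ *
          (stateDistAt t d0 T π (τ.1 (Fin.last t)) / stateDistAt t d0 T πβ (τ.1 (Fin.last t)) *
            f (τ.1 (Fin.last t)))) ∧
    (∑ τ : (Fin (t + 1) → S) × (Fin t → A),
        trajP t d0 T πβ τ *
          (stateDistAt t d0 T π (τ.1 (Fin.last t)) / stateDistAt t d0 T πβ (τ.1 (Fin.last t)) *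
            f (τ.1 (Fin.last t))) =
      ∑ s : S, stateDistAt t d0 T π s * f s) ∧
    ((∑ τ : (Fin (t + 1) → S) × (Fin t → A),
        trajP t d0 T πβ τ *
          (stateDistAt t d0 T π (τ.1 (Fin.last t)) / stateDistAt t d0 T πβ (τ.1 (Fin.last t)) *
            f (τ.1 (Fin.last t))) ^ 2) -
        (∑ s : S, stateDistAt t d0 T π s * f s) ^ 2 ≤
      (∑ τ : (Fin (t + 1) → S) × (Fin t → A),
        trajP t d0 T πβ τ *
          ((∏ i : Fin t, π (τ.1 i.castSucc) (τ.2 i) / πβ (τ.1 i.castSucc) (τ.2 i)) *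
            f (τ.1 (Fin.last t))) ^ 2) -
        (∑ s : S, stateDistAt t d0 T π s * f s) ^ 2) := by
  
  -- abbreviations
  set P : (Fin (t + 1) → S) × (Fin t → A) → ℝ := trajP t d0 T πβ with hPdef
  have hP0 : ∀ τ, 0 ≤ P τ := fun τ =>
    mul_nonneg (hd00 _) (Finset.prod_nonneg fun i _ =>
      mul_nonneg (hβ0 _ _).le (hT0 _ _ _))
  have hkey : ∀ τ, P τ *
      (∏ i : Fin t, π (τ.1 i.castSucc) (τ.2 i) / πβ (τ.1 i.castSucc) (τ.2 i)) =
      trajP t d0 T π τ := by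
    intro τ
    unfold P
    unfold trajP
    rw [mul_assoc, ← Finset.prod_mul_distrib]
    congr 1
    refine Finset.prod_congr rfl fun i _ => ?_
    have h := (hβ0 (τ.1 i.castSucc) (τ.2 i)).ne'
    field_simp
  have hfiber : ∀ F : (Fin (t + 1) → S) × (Fin t → A) → ℝ,
      (∑ τ, F τ) = ∑ s : S, ∑ τ, if τ.1 (Fin.last t) = s then F τ else 0 := by
    intro F
    rw [Finset.sum_comm]
    refine Finset.sum_congr rfl fun τ _ => ?_
    rw [Finset.sum_ite_eq]
    simp
  have hgroup : ∀ (μ : S → A → ℝ) (g : S → ℝ),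
      (∑ τ, trajP t d0 T μ τ * g (τ.1 (Fin.last t))) = ∑ s, stateDistAt t d0 T μ s * g s := by
    intro μ g
    rw [hfiber (fun τ => trajP t d0 T μ τ * g (τ.1 (Fin.last t)))]
    refine Finset.sum_congr rfl fun s _ => ?_
    unfold stateDistAt
    rw [Finset.sum_mul]
    refine Finset.sum_congr rfl fun τ _ => ?_
    split_ifs with h
    · rw [h]
    · simp
  have hdβne : ∀ s, stateDistAt t d0 T πβ s ≠ 0 := fun s => (hdβ s).ne'
  -- Part (ii): middle expression equals ∑ s, dπ s * f s
  have part2 : (∑ τ : (Fin (t + 1) → S) × (Fin t → A),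
        trajP t d0 T πβ τ *
          (stateDistAt t d0 T π (τ.1 (Fin.last t)) / stateDistAt t d0 T πβ (τ.1 (Fin.last t)) *
            f (τ.1 (Fin.last t))) =
      ∑ s : S, stateDistAt t d0 T π s * f s) := by
    rw [hgroup πβ (fun s => stateDistAt t d0 T π s / stateDistAt t d0 T πβ s * f s)]
    refine Finset.sum_congr rfl fun s _ => ?_
    field_simp [hdβne s]
  -- Part (i)
  have part1 : (∑ τ : (Fin (t + 1) → S) × (Fin t → A),
        trajP t d0 T πβ τ *
          ((∏ i : Fin t, π (τ.1 i.castSucc) (τ.2 i) / πβ (τ.1 i.castSucc) (τ.2 i)) *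
            f (τ.1 (Fin.last t))) =
      ∑ s : S, stateDistAt t d0 T π s * f s) := by
    have : ∀ τ : (Fin (t + 1) → S) × (Fin t → A),
        trajP t d0 T πβ τ *
          ((∏ i : Fin t, π (τ.1 i.castSucc) (τ.2 i) / πβ (τ.1 i.castSucc) (τ.2 i)) *
            f (τ.1 (Fin.last t))) = trajP t d0 T π τ * f (τ.1 (Fin.last t)) := by
      intro τ
      rw [← mul_assoc, hkey τ]
    rw [Finset.sum_congr rfl fun τ _ => this τ, hgroup π f]
  refine ⟨part1.trans part2.symm, part2, ?_⟩
  -- Part (iii): variance inequality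
  apply sub_le_sub_right
  -- LHS second moment
  have hL : (∑ τ : (Fin (t + 1) → S) × (Fin t → A),
        trajP t d0 T πβ τ *
          (stateDistAt t d0 T π (τ.1 (Fin.last t)) / stateDistAt t d0 T πβ (τ.1 (Fin.last t)) *
            f (τ.1 (Fin.last t))) ^ 2) =
      ∑ s : S, (stateDistAt t d0 T π s) ^ 2 / stateDistAt t d0 T πβ s * f s ^ 2 := by
    rw [hgroup πβ (fun s => (stateDistAt t d0 T π s / stateDistAt t d0 T πβ s * f s) ^ 2)]
    refine Finset.sum_congr rfl fun s _ => ?_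
    rw [mul_pow, div_pow, pow_two (stateDistAt t d0 T πβ s)]
    field_simp [hdβne s]
  rw [hL]
  -- RHS second moment, fiberwise
  rw [hfiber (fun τ => trajP t d0 T πβ τ *
      ((∏ i : Fin t, π (τ.1 i.castSucc) (τ.2 i) / πβ (τ.1 i.castSucc) (τ.2 i)) *
        f (τ.1 (Fin.last t))) ^ 2)]
  refine Finset.sum_le_sum fun s _ => ?_
  -- rewrite the fiber sum as C s * f s ^ 2
  have hC : (∑ τ, if τ.1 (Fin.last t) = s then
        trajP t d0 T πβ τ *
          ((∏ i : Fin t, π (τ.1 i.castSucc) (τ.2 i) / πβ (τ.1 i.castSucc) (τ.2 i)) *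
            f (τ.1 (Fin.last t))) ^ 2 else 0) =
      (∑ τ, if τ.1 (Fin.last t) = s then
        P τ * (∏ i : Fin t, π (τ.1 i.castSucc) (τ.2 i) / πβ (τ.1 i.castSucc) (τ.2 i)) ^ 2
        else 0) * f s ^ 2 := by
    rw [Finset.sum_mul]
    refine Finset.sum_congr rfl fun τ _ => ?_
    split_ifs with h
    · rw [h]; ring
    · simp
  rw [hC]
  set C := ∑ τ, if τ.1 (Fin.last t) = s then
      P τ * (∏ i : Fin t, π (τ.1 i.castSucc) (τ.2 i) / πβ (τ.1 i.castSucc) (τ.2 i)) ^ 2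
      else 0 with hCdef
  -- Cauchy–Schwarz on the fiber
  have hB : stateDistAt t d0 T π s =
      ∑ τ, if τ.1 (Fin.last t) = s then
        P τ * ∏ i : Fin t, π (τ.1 i.castSucc) (τ.2 i) / πβ (τ.1 i.castSucc) (τ.2 i) else 0 := by
    unfold stateDistAt
    refine Finset.sum_congr rfl fun τ _ => ?_
    split_ifs with h
    · rw [hkey τ]
    · rfl
  have hA : stateDistAt t d0 T πβ s =
      ∑ τ, if τ.1 (Fin.last t) = s then P τ else 0 := rfl
  have hCS : (stateDistAt t d0 T π s) ^ 2 ≤ stateDistAt t d0 T πβ s * C := by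
    rw [hB, hA, hCdef]
    have := Finset.sum_mul_sq_le_sq_mul_sq Finset.univ
      (fun τ : (Fin (t + 1) → S) × (Fin t → A) =>
        if τ.1 (Fin.last t) = s then Real.sqrt (P τ) else 0)
      (fun τ : (Fin (t + 1) → S) × (Fin t → A) =>
        if τ.1 (Fin.last t) = s then
          Real.sqrt (P τ) * ∏ i : Fin t, π (τ.1 i.castSucc) (τ.2 i) / πβ (τ.1 i.castSucc) (τ.2 i)
        else 0)
    refine le_trans (le_of_eq ?_) (le_trans this (le_of_eq ?_))
    · congr 1
      refine Finset.sum_congr rfl fun τ _ => ?_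
      split_ifs with h
      · rw [← mul_assoc, Real.mul_self_sqrt (hP0 τ)]
      · simp
    · congr 1
      · refine Finset.sum_congr rfl fun τ _ => ?_
        split_ifs with h
        · rw [Real.sq_sqrt (hP0 τ)]
        · simp
      · refine Finset.sum_congr rfl fun τ _ => ?_
        split_ifs with h
        · rw [mul_pow, Real.sq_sqrt (hP0 τ)]
        · simp
  -- conclude
  have hf2 : (0:ℝ) ≤ f s ^ 2 := sq_nonneg _
  have hC0 : 0 ≤ C := Finset.sum_nonneg fun τ _ => by
    split_ifs
    · exact mul_nonneg (hP0 τ) (sq_nonneg _)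
    · exact le_refl _
  have : (stateDistAt t d0 T π s) ^ 2 / stateDistAt t d0 T πβ s ≤ C := by
    rw [div_le_iff₀ (hdβ s)]
    calc (stateDistAt t d0 T π s) ^ 2 ≤ stateDistAt t d0 T πβ s * C := hCS
      _ = C * stateDistAt t d0 T πβ s := mul_comm _ _
  exact mul_le_mul_of_nonneg_right this hf2
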